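/- Let q : ℝ² → M_{k×(n−k)}(ℂ) be smooth, and let u = [[0, q],[−q*, 0]] and Q₂ = [[−i q q*, i q_x],[i q_x*, i q* q]] be the associated block matrices in u(n). Then the equation u_t = (Q₂)_x + [u, Q₂] holds identically if and only if q satisfies the matrix nonlinear Schrödinger equation q_t = i(q_xx + 2 q q* q). -/

import Mathlib

/-! Differentiating `Q₂` by the product rule and multiplying out the blocks, the diagonal blocks
of `(Q₂)_x + [u, Q₂]` cancel and its off-diagonal blocks are `P` and `-P*` with
`P = i (q_xx + 2 q q* q)`. Since `u_t` has off-diagonal blocks `q_t` and `-q_t*`, the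
zero-curvature equation says exactly `q_t = P`. -/

open Matrix

attribute [local instance] Matrix.normedAddCommGroup Matrix.normedSpace

section MatrixDeriv

variable {𝕜 : Type*} [NontriviallyNormedField 𝕜] {E : Type*} [NormedAddCommGroup E]
  [NormedSpace 𝕜 E] {l m n : Type*} {x : 𝕜}

theorem hasDerivAt_matrix [Fintype n] {F : 𝕜 → Matrix m n E} {F' : Matrix m n E} :
    HasDerivAt F F' x ↔ ∀ i j, HasDerivAt (fun y => F y i j) (F' i j) x :=
  hasDerivAt_pi.trans (forall_congr' fun _ => hasDerivAt_pi)

theorem HasDerivAt.matrix_mul [Fintype m] [Fintype n] {R : Type*} [NormedRing R] [NormedAlgebra 𝕜 R]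
    {A : 𝕜 → Matrix l m R} {B : 𝕜 → Matrix m n R} {A' : Matrix l m R} {B' : Matrix m n R}
    (hA : HasDerivAt A A' x) (hB : HasDerivAt B B' x) :
    HasDerivAt (fun y => A y * B y) (A' * B x + A x * B') x := by
  refine hasDerivAt_matrix.2 fun i j => ?_
  simp only [mul_apply, Matrix.add_apply, ← Finset.sum_add_distrib]
  exact HasDerivAt.fun_sum fun k _ => (hasDerivAt_matrix.1 hA i k).mul (hasDerivAt_matrix.1 hB k j)

theorem HasDerivAt.matrix_conjTranspose [Fintype m] [Fintype n] [StarRing 𝕜] [TrivialStar 𝕜]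
    [StarAddMonoid E] [ContinuousStar E] [StarModule 𝕜 E] {A : 𝕜 → Matrix m n E} {A' : Matrix m n E} (hA : HasDerivAt A A' x) :
    HasDerivAt (fun y => (A y)ᴴ) A'ᴴ x :=
  hasDerivAt_matrix.2 fun i j => (hasDerivAt_matrix.1 hA j i).star

theorem HasDerivAt.matrix_fromBlocks [Fintype l] [Fintype m] {A : 𝕜 → Matrix l l E} {B : 𝕜 → Matrix l m E} {C : 𝕜 → Matrix m l E}
    {D : 𝕜 → Matrix m m E} {A' : Matrix l l E} {B' : Matrix l m E} {C' : Matrix m l E}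
    {D' : Matrix m m E} (hA : HasDerivAt A A' x) (hB : HasDerivAt B B' x)
    (hC : HasDerivAt C C' x) (hD : HasDerivAt D D' x) :
    HasDerivAt (fun y => fromBlocks (A y) (B y) (C y) (D y)) (fromBlocks A' B' C' D') x := by
  refine hasDerivAt_matrix.2 ?_
  rintro (i | i) (j | j)
  exacts [hasDerivAt_matrix.1 hA i j, hasDerivAt_matrix.1 hB i j, hasDerivAt_matrix.1 hC i j,
    hasDerivAt_matrix.1 hD i j]

end MatrixDeriv

section PartialDeriv

variable {𝕜 : Type*} [NontriviallyNormedField 𝕜] {E : Type*} [NormedAddCommGroup E]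
  [NormedSpace 𝕜 E] {f : 𝕜 → 𝕜 → E} {m n : WithTop ℕ∞}

theorem ContDiff.differentiableAt_left (hf : ContDiff 𝕜 n (Function.uncurry f)) (hn : n ≠ 0)
    (x t : 𝕜) : DifferentiableAt 𝕜 (fun y => f y t) x :=
  ((hf.comp (contDiff_id.prodMk contDiff_const)).differentiable hn).differentiableAt

theorem ContDiff.differentiableAt_right (hf : ContDiff 𝕜 n (Function.uncurry f)) (hn : n ≠ 0)
    (x t : 𝕜) : DifferentiableAt 𝕜 (fun s => f x s) t :=
  ((hf.comp (contDiff_const.prodMk contDiff_id)).differentiable hn).differentiableAt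

theorem ContDiff.deriv_left (hf : ContDiff 𝕜 m (Function.uncurry f)) (hnm : n + 1 ≤ m) :
    ContDiff 𝕜 n fun p : 𝕜 × 𝕜 => deriv (fun y => f y p.2) p.1 :=
  ContDiff.fderiv_apply (f := fun p y => f y p.2)
    (hf.comp (contDiff_snd.prodMk (contDiff_snd.comp contDiff_fst))) contDiff_fst contDiff_const hnm

end PartialDeriv

section BlockAlgebra

open Complex

variable {m n : Type*}

theorem fromBlocks_zero_neg_conjTranspose_inj {α : Type*} [Zero α] [Neg α] [Star α]
    {A B : Matrix m n α} :
    fromBlocks 0 A (-Aᴴ) 0 = fromBlocks 0 B (-Bᴴ) 0 ↔ A = B :=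
  ⟨fun h => (fromBlocks_inj.1 h).2.1, fun h => h ▸ rfl⟩

theorem nls_zeroCurvature_rhs [Fintype m] [Fintype n] (q qx qxx : Matrix m n ℂ) :
    fromBlocks ((-I) • (qx * qᴴ + q * qxᴴ)) (I • qxx) (I • qxxᴴ) (I • (qxᴴ * q + qᴴ * qx)) +
      (fromBlocks 0 q (-qᴴ) 0 * fromBlocks ((-I) • (q * qᴴ)) (I • qx) (I • qxᴴ) (I • (qᴴ * q)) -
        fromBlocks ((-I) • (q * qᴴ)) (I • qx) (I • qxᴴ) (I • (qᴴ * q)) * fromBlocks 0 q (-qᴴ) 0) =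
      fromBlocks 0 (I • (qxx + (2 : ℂ) • (q * qᴴ * q))) (-(I • (qxx + (2 : ℂ) • (q * qᴴ * q)))ᴴ) 0 := by
  simp only [sub_eq_add_neg, fromBlocks_multiply, fromBlocks_neg, fromBlocks_add,
    conjTranspose_smul, conjTranspose_add, conjTranspose_mul, conjTranspose_conjTranspose,
    star_def, conj_I, conj_ofNat, Matrix.mul_smul, Matrix.smul_mul, Matrix.mul_neg,
    Matrix.neg_mul, Matrix.mul_zero, Matrix.zero_mul, Matrix.mul_assoc]
  rw [fromBlocks_inj]
  refine ⟨?_, ?_, ?_, ?_⟩ <;> module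

end BlockAlgebra

theorem stmt3_general (k m : ℕ)
    (q : ℝ → ℝ → Matrix (Fin k) (Fin m) ℂ)
    (hq : ContDiff ℝ (⊤ : ℕ∞) fun p : ℝ × ℝ => q p.1 p.2)
    -- partial derivatives of q
    (qx qxx qt : ℝ → ℝ → Matrix (Fin k) (Fin m) ℂ)
    (hqx : ∀ x t, qx x t = deriv (fun y => q y t) x)
    (hqxx : ∀ x t, qxx x t = deriv (fun y => qx y t) x)
    (hqt : ∀ x t, qt x t = deriv (fun s => q x s) t)
    -- the associated block matrices u and Q₂
    (u Q₂ : ℝ → ℝ → Matrix (Fin k ⊕ Fin m) (Fin k ⊕ Fin m) ℂ)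
    (hu : ∀ x t, u x t = Matrix.fromBlocks 0 (q x t) (-(q x t)ᴴ) 0)
    (hQ₂ : ∀ x t, Q₂ x t = Matrix.fromBlocks
        ((-Complex.I) • (q x t * (q x t)ᴴ)) (Complex.I • qx x t)
        (Complex.I • (qx x t)ᴴ) (Complex.I • ((q x t)ᴴ * q x t))) :
    -- u_t = (Q₂)_x + [u, Q₂]
    (∀ x t, deriv (fun s => u x s) t
        = deriv (fun y => Q₂ y t) x + (u x t * Q₂ x t - Q₂ x t * u x t))
    ↔
    -- the matrix nonlinear Schrödinger equation q_t = i(q_xx + 2qq*q)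
    (∀ x t, qt x t = Complex.I • (qxx x t + (2 : ℂ) • (q x t * (q x t)ᴴ * q x t))) := by
  have hqx_smooth : ContDiff ℝ (⊤ : ℕ∞) fun p : ℝ × ℝ => qx p.1 p.2 := by
    simp only [hqx]
    exact hq.deriv_left (by simp)
  have q_x (x t : ℝ) : HasDerivAt (fun y => q y t) (qx x t) x :=
    hqx x t ▸ (hq.differentiableAt_left (by simp) x t).hasDerivAt
  have qx_x (x t : ℝ) : HasDerivAt (fun y => qx y t) (qxx x t) x :=
    hqxx x t ▸ (hqx_smooth.differentiableAt_left (by simp) x t).hasDerivAt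
  have q_t (x t : ℝ) : HasDerivAt (fun s => q x s) (qt x t) t :=
    hqt x t ▸ (hq.differentiableAt_right (by simp) x t).hasDerivAt
  have u_t (x t : ℝ) : deriv (fun s => u x s) t = fromBlocks 0 (qt x t) (-(qt x t)ᴴ) 0 := by
    simp only [hu]
    exact ((hasDerivAt_const _ _).matrix_fromBlocks (q_t x t)
      (q_t x t).matrix_conjTranspose.neg (hasDerivAt_const _ _)).deriv
  have Q₂_x (x t : ℝ) : deriv (fun y => Q₂ y t) x = fromBlocks
      ((-Complex.I) • (qx x t * (q x t)ᴴ + q x t * (qx x t)ᴴ)) (Complex.I • qxx x t)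
      (Complex.I • (qxx x t)ᴴ) (Complex.I • ((qx x t)ᴴ * q x t + (q x t)ᴴ * qx x t)) := by
    simp only [hQ₂]
    exact (HasDerivAt.matrix_fromBlocks
      (((q_x x t).matrix_mul (q_x x t).matrix_conjTranspose).const_smul (-Complex.I))
      ((qx_x x t).const_smul Complex.I) ((qx_x x t).matrix_conjTranspose.const_smul Complex.I)
      (((q_x x t).matrix_conjTranspose.matrix_mul (q_x x t)).const_smul Complex.I)).deriv
  refine forall₂_congr fun x t => ?_
  rw [u_t, Q₂_x, hu, hQ₂, nls_zeroCurvature_rhs, fromBlocks_zero_neg_conjTranspose_inj]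

/-- For smooth `q : ℝ² → M_{k×(n−k)}(ℂ)` with associated block matrices
`u = [[0,q],[−q*,0]]` and `Q₂ = [[−iqq*, iq_x],[iq_x*, iq*q]]`, the equation
`u_t = (Q₂)_x + [u, Q₂]` holds identically iff `q` satisfies the matrix nonlinear
Schrödinger equation `q_t = i(q_xx + 2qq*q)`. -/
theorem stmt3 (k m : ℕ) (hk : 0 < k) (hm : 0 < m)
    (q : ℝ → ℝ → Matrix (Fin k) (Fin m) ℂ)
    (hq : ContDiff ℝ (⊤ : ℕ∞) fun p : ℝ × ℝ => q p.1 p.2)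
    -- partial derivatives of q
    (qx qxx qt : ℝ → ℝ → Matrix (Fin k) (Fin m) ℂ)
    (hqx : ∀ x t, qx x t = deriv (fun y => q y t) x)
    (hqxx : ∀ x t, qxx x t = deriv (fun y => qx y t) x)
    (hqt : ∀ x t, qt x t = deriv (fun s => q x s) t)
    -- the associated block matrices u and Q₂
    (u Q₂ : ℝ → ℝ → Matrix (Fin k ⊕ Fin m) (Fin k ⊕ Fin m) ℂ)
    (hu : ∀ x t, u x t = Matrix.fromBlocks 0 (q x t) (-(q x t)ᴴ) 0)
    (hQ₂ : ∀ x t, Q₂ x t = Matrix.fromBlocks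
        ((-Complex.I) • (q x t * (q x t)ᴴ)) (Complex.I • qx x t)
        (Complex.I • (qx x t)ᴴ) (Complex.I • ((q x t)ᴴ * q x t))) :
    -- u_t = (Q₂)_x + [u, Q₂]
    (∀ x t, deriv (fun s => u x s) t
        = deriv (fun y => Q₂ y t) x + (u x t * Q₂ x t - Q₂ x t * u x t))
    ↔
    -- the matrix nonlinear Schrödinger equation q_t = i(q_xx + 2qq*q)
    (∀ x t, qt x t = Complex.I • (qxx x t + (2 : ℂ) • (q x t * (q x t)ᴴ * q x t))) :=
  stmt3_general k m q hq qx qxx qt hqx hqxx hqt u Q₂ hu hQ₂
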